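/- Let {X, φ_i} be a fundamental limit space for the CIS {X_i, Y_i, f_i}. If X is compact, then each X_i is compact. -/

import Mathlib

universe u v w

/-- A closed injective system (CIS): nonempty topological spaces `X i`, closed subspaces
`Y i ⊆ X i`, and closed injective continuous maps `f i : Y i → X (i+1)`, modeled as total
maps `f i : X i → X (i+1)` whose relevant properties are only required on `Y i`. -/
structure CIS where
  X : ℕ → Type u
  topX : ∀ i, TopologicalSpace (X i)
  nonemptyX : ∀ i, Nonempty (X i)
  Y : ∀ i, Set (X i)
  closedY : ∀ i, IsClosed (Y i)
  f : ∀ i, X i → X (i + 1)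
  f_contOn : ∀ i, ContinuousOn (f i) (Y i)
  f_injOn : ∀ i, Set.InjOn (f i) (Y i)
  f_closedOn : ∀ i (C : Set (X i)), IsClosed C → C ⊆ Y i → IsClosed (f i '' C)

instance (S : CIS) (i : ℕ) : TopologicalSpace (S.X i) := S.topX i

/-- The iterated composition `f_{j-1} ∘ ⋯ ∘ f_i : X i → X j` (total extension of `f_{i,j-1}`). -/
def CIS.T (S : CIS) {i j : ℕ} (h : i ≤ j) (x : S.X i) : S.X j :=
  Nat.leRecOn h (fun {k} y => S.f k y) x

/-- The set `Y_{i,j}` (domain of `f_{i,j}`): points of `Y i` whose iterated images remain in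
the sets `Y k` for all `i ≤ k ≤ j`. -/
def CIS.YY (S : CIS) (i j : ℕ) : Set (S.X i) :=
  {x | ∀ k, ∀ h : i ≤ k, k ≤ j → S.T h x ∈ S.Y k}

/-- `f i` and `f j` are semicomponible (`i ≤ j`): every map is semicomponible with itself,
and for `i < j` semicomponibility means that the domain `Y_{i,j}` is nonempty. -/
def CIS.Semicomp (S : CIS) (i j : ℕ) : Prop :=
  i = j ∨ (i < j ∧ (S.YY i j).Nonempty)

/-- A limit space `{L, φ}` for a CIS. -/
structure IsLimitSpace (S : CIS) (L : Type v) [TopologicalSpace L]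
    (φ : ∀ i, S.X i → L) : Prop where
  covers : ⋃ i, Set.range (φ i) = Set.univ
  embedding : ∀ i, Topology.IsEmbedding (φ i)
  l3 : ∀ i j, ∀ hij : i < j, S.Semicomp i j →
    Set.range (φ i) ∩ Set.range (φ j) = φ j '' (S.T hij.le '' S.YY i (j - 1))
  l3' : ∀ i j, ∀ hij : i < j, S.Semicomp i j → ∀ (xi : S.X i) (xj : S.X j),
    φ i xi = φ j xj → xi ∈ S.YY i (j - 1) ∧ xj = S.T hij.le xi
  l4 : ∀ i j, i < j → ¬ S.Semicomp i j → Set.range (φ i) ∩ Set.range (φ j) = ∅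

/-- A fundamental limit space: a limit space whose topology is the weak topology
induced by the maps `φ i`. -/
structure IsFundamentalLimitSpace (S : CIS) (L : Type v) [TopologicalSpace L]
    (φ : ∀ i, S.X i → L) extends IsLimitSpace S L φ : Prop where
  weakTopology : ∀ A : Set L, IsClosed A ↔ ∀ i, IsClosed (φ i ⁻¹' A)

/-- A cis-morphism between closed injective systems. -/
structure CISMorphism (S S' : CIS) where
  h : ∀ i, S.X i → S'.X i
  cont : ∀ i, Continuous (h i)
  closedMap : ∀ i, IsClosedMap (h i)
  mapsY : ∀ i, h i '' S.Y i ⊆ S'.Y i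
  comm : ∀ i, ∀ y ∈ S.Y i, h (i + 1) (S.f i y) = S'.f i (h i y)

/-- A cis-isomorphism: each `h i` is a homeomorphism carrying `Y i` onto `Y' i`. -/
def CISMorphism.IsIso {S S' : CIS} (m : CISMorphism S S') : Prop :=
  ∀ i, Function.Bijective (m.h i) ∧ m.h i '' S.Y i = S'.Y i

/-- The generating relation identifying each `y ∈ Y i` with `f i y ∈ X (i+1)`. -/
def CIS.Rel0 (S : CIS) (a b : Σ i, S.X i) : Prop :=
  a.2 ∈ S.Y a.1 ∧ b = ⟨a.1 + 1, S.f a.1 a.2⟩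

/-- The relation `~` on the coproduct `⨿ X i` for an inductive CIS:
`⟨i, x⟩ ~ ⟨j, y⟩` iff `y = f_i^j x` when `i ≤ j`, and `x = f_j^i y` when `j < i`. -/
def CIS.IndRel (S : CIS) (a b : Σ i, S.X i) : Prop :=
  (∀ h : a.1 ≤ b.1, S.T h a.2 = b.2) ∧ (∀ h : b.1 < a.1, S.T h.le b.2 = a.2)

/-- A CIS is finitely semicomponible if for each `i` only finitely many `j` are such that
`f i, f j` (or `f j, f i`) are semicomponible. -/
def CIS.FinitelySemicomp (S : CIS) : Prop :=
  ∀ i, {j | S.Semicomp i j ∨ S.Semicomp j i}.Finite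

/-! Each `φ i (X i)` is closed in `X`: its preimage under `φ j` is `Y_{j,i-1}` (for `j < i`),
`f_{i,j-1}(Y_{i,j-1})` (for `i < j`), or empty, and these sets are closed because the `Y k` are
closed and the `f k` are continuous and closed on them. A closed subset of the compact space `X`
is compact, and `φ i` is an embedding, so `X i` is compact. -/

open Set

namespace CIS

variable (S : CIS)

lemma T_self {i : ℕ} (h : i ≤ i) (x : S.X i) : S.T h x = x := Nat.leRecOn_self x

lemma T_succ {i j : ℕ} (h : i ≤ j) (h' : i ≤ j + 1) (x : S.X i) :
    S.T h' x = S.f j (S.T h x) := Nat.leRecOn_succ h x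

lemma image_T_succ {i j : ℕ} (h : i ≤ j) (h' : i ≤ j + 1) (s : Set (S.X i)) :
    S.T h' '' s = S.f j '' (S.T h '' s) := by
  rw [← image_comp]
  exact image_congr fun x _ => S.T_succ h h' x

lemma YY_antitone (i : ℕ) : Antitone (S.YY i) :=
  fun _ _ hmn _ hx k hik hkm => hx k hik (hkm.trans hmn)

lemma YY_of_lt {i j : ℕ} (h : j < i) : S.YY i j = univ :=
  eq_univ_of_forall fun _ _ hik hkj => absurd (hik.trans hkj) h.not_ge

lemma YY_self (i : ℕ) : S.YY i i = S.Y i := by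
  ext x
  refine ⟨fun hx => S.T_self le_rfl x ▸ hx i le_rfl le_rfl, fun hx k hik hki => ?_⟩
  obtain rfl := le_antisymm hki hik
  rwa [S.T_self]

lemma YY_succ {i j : ℕ} (h : i ≤ j + 1) :
    S.YY i (j + 1) = S.YY i j ∩ S.T h ⁻¹' S.Y (j + 1) := by
  ext x
  refine ⟨fun hx => ⟨S.YY_antitone i j.le_succ hx, hx (j + 1) h le_rfl⟩, ?_⟩
  rintro ⟨hx, hxj⟩ k hik hkj
  rcases hkj.lt_or_eq with hkj | rfl
  · exact hx k hik (Nat.lt_succ_iff.mp hkj)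
  · exact hxj

lemma mapsTo_T {i j : ℕ} (h : i ≤ j) : MapsTo (S.T h) (S.YY i j) (S.Y j) :=
  fun _ hx => hx j h le_rfl

lemma continuousOn_T {i j : ℕ} (h : i ≤ j) : ContinuousOn (S.T h) (S.YY i (j - 1)) := by
  induction j, h using Nat.le_induction with
  | base => exact continuousOn_id.congr fun x _ => S.T_self le_rfl x
  | succ j hij ih =>
    have hcomp : ContinuousOn (S.f j ∘ S.T hij) (S.YY i j) :=
      (S.f_contOn j).comp (ih.mono (S.YY_antitone i (j.sub_le 1))) (S.mapsTo_T hij)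
    exact hcomp.congr fun x _ => S.T_succ hij _ x

lemma injOn_T {i j : ℕ} (h : i ≤ j) : InjOn (S.T h) (S.YY i (j - 1)) := by
  induction j, h using Nat.le_induction with
  | base => exact fun x _ y _ hxy => by rwa [S.T_self, S.T_self] at hxy
  | succ j hij ih =>
    intro x hx y hy hxy
    rw [S.T_succ hij, S.T_succ hij] at hxy
    have hsub := S.YY_antitone i (j.sub_le 1)
    exact ih (hsub hx) (hsub hy) (S.f_injOn j (S.mapsTo_T hij hx) (S.mapsTo_T hij hy) hxy)

lemma isClosed_YY (i j : ℕ) : IsClosed (S.YY i j) := by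
  rcases lt_or_ge j i with hji | hij
  · rw [S.YY_of_lt hji]
    exact isClosed_univ
  induction j, hij using Nat.le_induction with
  | base => rw [S.YY_self]; exact S.closedY i
  | succ j hij ih =>
    rw [S.YY_succ (hij.trans j.le_succ)]
    exact (S.continuousOn_T _).preimage_isClosed_of_isClosed ih (S.closedY (j + 1))

lemma isClosed_image_T {i j : ℕ} (h : i ≤ j) : IsClosed (S.T h '' S.YY i j) := by
  induction j, h using Nat.le_induction with
  | base => rw [S.YY_self, image_congr fun x _ => S.T_self le_rfl x, image_id']; exact S.closedY i
  | succ j hij ih =>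
    rw [S.YY_succ (hij.trans j.le_succ), image_inter_preimage, S.image_T_succ hij]
    exact (S.f_closedOn j _ ih (S.mapsTo_T hij).image_subset).inter (S.closedY (j + 1))

lemma isClosed_image_T_YY_pred {i j : ℕ} (h : i < j) : IsClosed (S.T h.le '' S.YY i (j - 1)) := by
  obtain ⟨j, rfl⟩ := Nat.exists_eq_add_of_lt h
  have hij : i ≤ i + j := Nat.le_add_right i j
  rw [show i + j + 1 - 1 = i + j by omega, S.image_T_succ hij]
  exact S.f_closedOn _ _ (S.isClosed_image_T hij) (S.mapsTo_T hij).image_subset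

end CIS

namespace IsLimitSpace

variable {S : CIS} {L : Type v} [TopologicalSpace L] {φ : ∀ i, S.X i → L}

lemma apply_eq_apply_T (hL : IsLimitSpace S L φ) {i j : ℕ} (hij : i < j) (sc : S.Semicomp i j)
    {x : S.X i} (hx : x ∈ S.YY i (j - 1)) : φ i x = φ j (S.T hij.le x) := by
  have hmem : φ j (S.T hij.le x) ∈ range (φ i) ∩ range (φ j) := by
    rw [hL.l3 i j hij sc]
    exact mem_image_of_mem _ (mem_image_of_mem _ hx)
  obtain ⟨⟨x', hx'⟩, -⟩ := hmem
  obtain ⟨hx'Y, hTx'⟩ := hL.l3' i j hij sc x' _ hx'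
  rwa [S.injOn_T hij.le hx'Y hx hTx'.symm] at hx'

lemma preimage_range_of_lt (hL : IsLimitSpace S L φ) {i j : ℕ} (hij : i < j)
    (sc : S.Semicomp i j) :
    φ j ⁻¹' range (φ i) = S.T hij.le '' S.YY i (j - 1) := by
  ext x
  refine ⟨fun ⟨x', hx'⟩ => ?_, ?_⟩
  · obtain ⟨hx'Y, rfl⟩ := hL.l3' i j hij sc x' x hx'
    exact mem_image_of_mem _ hx'Y
  · rintro ⟨x', hx', rfl⟩
    exact ⟨x', hL.apply_eq_apply_T hij sc hx'⟩

lemma preimage_range_of_gt (hL : IsLimitSpace S L φ) {i j : ℕ} (hji : j < i)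
    (sc : S.Semicomp j i) :
    φ j ⁻¹' range (φ i) = S.YY j (i - 1) := by
  ext x
  refine ⟨fun ⟨x', hx'⟩ => (hL.l3' j i hji sc x x' hx'.symm).1, fun hx => ?_⟩
  exact ⟨S.T hji.le x, (hL.apply_eq_apply_T hji sc hx).symm⟩

lemma isClosed_preimage_range (hL : IsLimitSpace S L φ) (i j : ℕ) :
    IsClosed (φ j ⁻¹' range (φ i)) := by
  rcases lt_trichotomy i j with hij | rfl | hji
  · by_cases sc : S.Semicomp i j
    · rw [hL.preimage_range_of_lt hij sc]
      exact S.isClosed_image_T_YY_pred hij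
    · rw [preimage_eq_empty (disjoint_iff_inter_eq_empty.mpr (hL.l4 i j hij sc))]
      exact isClosed_empty
  · rw [preimage_range]
    exact isClosed_univ
  · by_cases sc : S.Semicomp j i
    · rw [hL.preimage_range_of_gt hji sc]
      exact S.isClosed_YY j (i - 1)
    · rw [preimage_eq_empty (disjoint_iff_inter_eq_empty.mpr
        ((inter_comm _ _).trans (hL.l4 j i hji sc)))]
      exact isClosed_empty

end IsLimitSpace

theorem IsFundamentalLimitSpace.isClosedEmbedding {S : CIS} {L : Type v} [TopologicalSpace L]
    {φ : ∀ i, S.X i → L} (hL : IsFundamentalLimitSpace S L φ) (i : ℕ) :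
    Topology.IsClosedEmbedding (φ i) :=
  ⟨hL.embedding i, (hL.weakTopology _).mpr fun j => hL.isClosed_preimage_range i j⟩

theorem stmt8 (S : CIS) (L : Type v) [TopologicalSpace L] (φ : ∀ i, S.X i → L)
    (hL : IsFundamentalLimitSpace S L φ) (hc : CompactSpace L) :
    ∀ i, CompactSpace (S.X i) :=
  fun i => (hL.isClosedEmbedding i).compactSpace
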